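/- Let 𝒟 be an additive ℂ-linear rigid symmetric monoidal category, 𝒱 a tensor category, and I : 𝒟 → 𝒱 a ℂ-linear symmetric monoidal functor satisfying assumptions (1)–(3). Let F : 𝒟 → 𝒜 be a pre-exact additive ℂ-linear functor into an abelian ℂ-linear category 𝒜. If (U, θ) and (U′, θ′) are two pairs consisting of a pre-exact functor 𝒱 → 𝒜 and a natural isomorphism θ : U ∘ I ≅ F (resp. θ′ : U′ ∘ I ≅ F), then there exists a unique natural isomorphism φ : U ≅ U′ such that θ′_X ∘ φ_{I(X)} = θ_X for every object X of 𝒟. (Uniqueness part of the pre-exact universality theorem: the groupoid of pre-exact lifts is contractible.) -/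

import Mathlib

/-!
A natural transformation `ψ : I ⋙ U ⟶ I ⋙ U'` is automatically natural along every morphism
between objects `I X`, since `I` is full. Every `M : V` sits in `I P ↠ M ↪ I Q`; applying `U`
and `U'` and using that an epimorphism lifts against a monomorphism in an abelian category, `ψ`
extends to `U ⟶ U'`, uniquely because `U` sends `I P ↠ M` to an epimorphism. Extending
`θ.hom ≫ θ'.inv` and its inverse gives mutually inverse transformations, again by uniqueness.
-/

open CategoryTheory CategoryTheory.Limits CategoryTheory.MonoidalCategory

universe v₁ v₂ v₃ u₁ u₂ u₃

namespace CategoryTheory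

variable {C : Type*} [Category C] {V : Type*} [Category V] {A : Type*} [Category A]

theorem NatTrans.naturality_of_full {I : C ⥤ V} [I.Full] {U U' : V ⥤ A} (ψ : I ⋙ U ⟶ I ⋙ U')
    {X Y : C} (g : I.obj X ⟶ I.obj Y) : U.map g ≫ ψ.app Y = ψ.app X ≫ U'.map g := by
  simpa using ψ.naturality (I.preimage g)

theorem NatTrans.ext_of_app_obj_eq {I : C ⥤ V}
    (hquot : ∀ M : V, ∃ (P : C) (e : I.obj P ⟶ M), Epi e) {U G : V ⥤ A}
    (hU : ∀ ⦃M N : V⦄ (g : M ⟶ N), Epi g → Epi (U.map g))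
    {φ₁ φ₂ : U ⟶ G} (h : ∀ X : C, φ₁.app (I.obj X) = φ₂.app (I.obj X)) : φ₁ = φ₂ := by
  ext M
  obtain ⟨P, e, he⟩ := hquot M
  have := hU e he
  rw [← cancel_epi (U.map e), φ₁.naturality, φ₂.naturality, h]

section Extension

variable [StrongEpiCategory A] {I : C ⥤ V} [I.Full]
  (hquot : ∀ M : V, ∃ (P : C) (e : I.obj P ⟶ M), Epi e)
  (hsub : ∀ M : V, ∃ (Q : C) (m : M ⟶ I.obj Q), Mono m)
  {U U' : V ⥤ A} (hU : ∀ ⦃M N : V⦄ (g : M ⟶ N), Epi g → Epi (U.map g))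
  (hU' : ∀ ⦃M N : V⦄ (g : M ⟶ N), Mono g → Mono (U'.map g))
  (ψ : I ⋙ U ⟶ I ⋙ U')
include hquot hsub hU hU'

theorem NatTrans.exists_extension_app (M : V) : ∃ c : U.obj M ⟶ U'.obj M,
    ∀ (X : C) (g : I.obj X ⟶ M), U.map g ≫ c = ψ.app X ≫ U'.map g := by
  obtain ⟨P, e, he⟩ := hquot M
  obtain ⟨Q, m, hm⟩ := hsub M
  have := hU e he
  have := hU' m hm
  have := strongEpi_of_epi (U.map e)
  have sq : CommSq (ψ.app P ≫ U'.map e) (U.map e) (U'.map m) (U.map m ≫ ψ.app Q) :=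
    ⟨by simpa using (NatTrans.naturality_of_full ψ (e ≫ m)).symm⟩
  refine ⟨sq.lift, fun X g => ?_⟩
  rw [← cancel_mono (U'.map m), Category.assoc, sq.fac_right, ← Category.assoc, ← U.map_comp,
    NatTrans.naturality_of_full, Category.assoc, U'.map_comp]

theorem NatTrans.exists_extension : ∃ φ : U ⟶ U', ∀ X : C, φ.app (I.obj X) = ψ.app X := by
  choose c hc using NatTrans.exists_extension_app hquot hsub hU hU' ψ
  refine ⟨{ app := c, naturality := fun M N g => ?_ }, fun X => by simpa using hc _ X (𝟙 _)⟩
  obtain ⟨P, e, he⟩ := hquot M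
  have := hU e he
  rw [← cancel_epi (U.map e), ← Category.assoc, ← U.map_comp, hc, U'.map_comp,
    ← Category.assoc, ← hc, Category.assoc]

end Extension

theorem NatIso.exists_extension [StrongEpiCategory A] {I : C ⥤ V} [I.Full]
    (hquot : ∀ M : V, ∃ (P : C) (e : I.obj P ⟶ M), Epi e)
    (hsub : ∀ M : V, ∃ (Q : C) (m : M ⟶ I.obj Q), Mono m) {U U' : V ⥤ A}
    (hUmono : ∀ ⦃M N : V⦄ (g : M ⟶ N), Mono g → Mono (U.map g))
    (hUepi : ∀ ⦃M N : V⦄ (g : M ⟶ N), Epi g → Epi (U.map g))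
    (hU'mono : ∀ ⦃M N : V⦄ (g : M ⟶ N), Mono g → Mono (U'.map g))
    (hU'epi : ∀ ⦃M N : V⦄ (g : M ⟶ N), Epi g → Epi (U'.map g))
    (ψ : I ⋙ U ≅ I ⋙ U') : ∃ φ : U ≅ U', ∀ X : C, φ.hom.app (I.obj X) = ψ.hom.app X := by
  obtain ⟨φ, hφ⟩ := NatTrans.exists_extension hquot hsub hUepi hU'mono ψ.hom
  obtain ⟨φ', hφ'⟩ := NatTrans.exists_extension hquot hsub hU'epi hUmono ψ.inv
  refine ⟨⟨φ, φ', ?_, ?_⟩, hφ⟩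
  · exact NatTrans.ext_of_app_obj_eq hquot hUepi fun X => by simp [hφ, hφ']
  · exact NatTrans.ext_of_app_obj_eq hquot hU'epi fun X => by simp [hφ, hφ']

end CategoryTheory

theorem deligne_preexact_universality_uniqueness_general
    {D : Type u₁} [Category.{v₁} D]
    {V : Type u₂} [Category.{v₂} V] [Abelian V]
    (I : D ⥤ V) [I.Full]
    (h2 : ∀ M : V, ∃ (P Q : D) (f : P ⟶ Q), Nonempty (image (I.map f) ≅ M))
    {A : Type u₃} [Category.{v₃} A] [Abelian A]
    (F : D ⥤ A)
    (U : V ⥤ A)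
    (hUmono : ∀ ⦃X Y : V⦄ (g : X ⟶ Y), Mono g → Mono (U.map g))
    (hUepi : ∀ ⦃X Y : V⦄ (g : X ⟶ Y), Epi g → Epi (U.map g))
    (U' : V ⥤ A)
    (hU'mono : ∀ ⦃X Y : V⦄ (g : X ⟶ Y), Mono g → Mono (U'.map g))
    (hU'epi : ∀ ⦃X Y : V⦄ (g : X ⟶ Y), Epi g → Epi (U'.map g))
    (θ : I ⋙ U ≅ F) (θ' : I ⋙ U' ≅ F) :
    ∃! φ : U ≅ U',
      ∀ X : D, φ.hom.app (I.obj X) ≫ θ'.hom.app X = θ.hom.app X := by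
  have hquot : ∀ M : V, ∃ (P : D) (e : I.obj P ⟶ M), Epi e := fun M => by
    obtain ⟨P, _, f, ⟨w⟩⟩ := h2 M
    exact ⟨P, factorThruImage (I.map f) ≫ w.hom, inferInstance⟩
  have hsub : ∀ M : V, ∃ (Q : D) (m : M ⟶ I.obj Q), Mono m := fun M => by
    obtain ⟨_, Q, f, ⟨w⟩⟩ := h2 M
    exact ⟨Q, w.inv ≫ image.ι (I.map f), inferInstance⟩
  have restrict_iff : ∀ (φ : U ≅ U') (X : D),
      φ.hom.app (I.obj X) ≫ θ'.hom.app X = θ.hom.app X ↔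
        φ.hom.app (I.obj X) = (θ ≪≫ θ'.symm).hom.app X := fun φ X =>
    (Iso.eq_comp_inv (θ'.app X)).symm
  obtain ⟨φ, hφ⟩ := NatIso.exists_extension hquot hsub hUmono hUepi hU'mono hU'epi
    (θ ≪≫ θ'.symm)
  refine ⟨φ, fun X => (restrict_iff φ X).2 (hφ X), fun φ' hφ' => ?_⟩
  exact Iso.ext <| NatTrans.ext_of_app_obj_eq hquot hUepi fun X =>
    ((restrict_iff φ' X).1 (hφ' X)).trans (hφ X).symm

theorem deligne_preexact_universality_uniqueness
    {D : Type u₁} [Category.{v₁} D] [Preadditive D] [CategoryTheory.Linear ℂ D]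
    [HasFiniteBiproducts D] [MonoidalCategory D] [SymmetricCategory D]
    [MonoidalPreadditive D] [MonoidalLinear ℂ D] [RigidCategory D]
    {V : Type u₂} [Category.{v₂} V] [Abelian V] [CategoryTheory.Linear ℂ V]
    [MonoidalCategory V] [SymmetricCategory V] [MonoidalPreadditive V]
    [MonoidalLinear ℂ V] [RigidCategory V]
    (hV : Function.Bijective fun c : ℂ => c • (𝟙 (𝟙_ V)))
    (I : D ⥤ V) [I.Braided] [I.Additive] [I.Linear ℂ] [I.Full] [I.Faithful]
    (h2 : ∀ M : V, ∃ (P Q : D) (f : P ⟶ Q), Nonempty (image (I.map f) ≅ M))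
    (h3e : ∀ ⦃X Y : V⦄ (g : X ⟶ Y), Epi g →
      ∃ T : D, ¬ IsZero T ∧ IsSplitEpi (g ▷ I.obj T))
    (h3m : ∀ ⦃X Y : V⦄ (g : X ⟶ Y), Mono g →
      ∃ T : D, ¬ IsZero T ∧ IsSplitMono (g ▷ I.obj T))
    {A : Type u₃} [Category.{v₃} A] [Abelian A] [CategoryTheory.Linear ℂ A]
    (F : D ⥤ A) [F.Additive] [F.Linear ℂ]
    (hFmono : ∀ ⦃X Y : D⦄ (f : X ⟶ Y), Mono (I.map f) → Mono (F.map f))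
    (hFepi : ∀ ⦃X Y : D⦄ (f : X ⟶ Y), Epi (I.map f) → Epi (F.map f))
    (U : V ⥤ A) [U.Additive]
    (hUmono : ∀ ⦃X Y : V⦄ (g : X ⟶ Y), Mono g → Mono (U.map g))
    (hUepi : ∀ ⦃X Y : V⦄ (g : X ⟶ Y), Epi g → Epi (U.map g))
    (U' : V ⥤ A) [U'.Additive]
    (hU'mono : ∀ ⦃X Y : V⦄ (g : X ⟶ Y), Mono g → Mono (U'.map g))
    (hU'epi : ∀ ⦃X Y : V⦄ (g : X ⟶ Y), Epi g → Epi (U'.map g))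
    (θ : I ⋙ U ≅ F) (θ' : I ⋙ U' ≅ F) :
    ∃! φ : U ≅ U',
      ∀ X : D, φ.hom.app (I.obj X) ≫ θ'.hom.app X = θ.hom.app X :=
  deligne_preexact_universality_uniqueness_general I h2 F U hUmono hUepi U' hU'mono hU'epi θ θ'
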